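/- Assume P : ℝ^d × ℝ^d → ℝ is continuous, symmetric (P(v,w) = P(w,v) for all v,w), and bounded with −a ≤ P(v,w) ≤ b for all v,w, where a, b ≥ 0. Let k_d, k_o solve the scaled Riccati system and let differentiable functions v_1,…,v_N : [0,T] → ℝ^d solve the closed-loop system. Then the empirical variance σ²(t) = (1/N) Σ_{j=1}^N |v_j(t) − m(t)|², with m(t) = (1/N) Σ_{j=1}^N v_j(t), satisfies for all t ∈ [0,T]: σ²(0) e^{−2bt} C_N(t) ≤ σ²(t) ≤ σ²(0) e^{2at} C_N(t), where C_N(t) = exp(−(2/ν) ∫₀ᵗ (k_d(s) − k_o(s)/N) ds). -/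

import Mathlib

/-!
Along a solution, `σ²' = (2/N) Σⱼ ⟪vⱼ - m, vⱼ'⟫`. The part of the feedback common to all agents
drops out because `Σⱼ (vⱼ - m) = 0`, the diagonal feedback contributes `-(2/ν)(k_d - k_o/N) σ²`,
and, by the symmetry of `P`, the interaction contributes `-(1/N²) Σⱼₖ P(vⱼ, vₖ) ‖vₖ - vⱼ‖²`, which
lies between `-2bσ²` and `2aσ²` because `Σⱼₖ ‖vₖ - vⱼ‖² = 2N²σ²`. The two resulting linear
differential inequalities for `σ²` integrate, by an integrating factor, to the two bounds.
-/

open Set Finset MeasureTheory Real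
open scoped RealInnerProductSpace

section Gronwall

variable {f f' g : ℝ → ℝ} {a b : ℝ}

theorem le_mul_exp_integral_of_deriv_le_mul (hg : ContinuousOn g (Icc a b))
    (hf : ContinuousOn f (Icc a b)) (hf' : ∀ t ∈ Ioo a b, HasDerivAt f (f' t) t)
    (hle : ∀ t ∈ Ioo a b, f' t ≤ g t * f t) :
    ∀ t ∈ Icc a b, f t ≤ f a * exp (∫ s in a..t, g s) := by
  intro t ht
  have hab : a ≤ b := ht.1.trans ht.2
  set G : ℝ → ℝ := fun t => ∫ s in a..t, g s
  have hGc : ContinuousOn G (Icc a b) := by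
    rw [← uIcc_of_le hab] at hg ⊢
    exact intervalIntegral.continuousOn_primitive_interval (hg.integrableOn_compact isCompact_uIcc)
  have hG' : ∀ s ∈ Ioo a b, HasDerivAt G (g s) s := fun s hs =>
    intervalIntegral.integral_hasDerivAt_right
      ((hg.mono (Icc_subset_Icc_right hs.2.le)).intervalIntegrable_of_Icc hs.1.le)
      ((hg.mono Ioo_subset_Icc_self).stronglyMeasurableAtFilter isOpen_Ioo s hs)
      (hg.continuousAt (Icc_mem_nhds hs.1 hs.2))
  have hanti : AntitoneOn (fun s => f s * exp (-G s)) (Icc a b) := by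
    refine antitoneOn_of_hasDerivWithinAt_nonpos (convex_Icc a b)
      (f' := fun s => (f' s - g s * f s) * exp (-G s))
      (hf.mul (continuous_exp.comp_continuousOn hGc.neg)) (fun s hs => ?_) (fun s hs => ?_)
    · rw [interior_Icc] at hs
      exact ((hf' s hs).mul (hG' s hs).neg.exp).hasDerivWithinAt.congr_deriv
        (by simp only [Pi.neg_apply]; ring)
    · rw [interior_Icc] at hs
      exact mul_nonpos_of_nonpos_of_nonneg (sub_nonpos.2 (hle s hs)) (exp_pos _).le
  have hFt : f t * exp (-G t) ≤ f a := by
    simpa [G] using hanti (left_mem_Icc.2 hab) ht ht.1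
  calc f t = f t * exp (-G t) * exp (G t) := by
        rw [mul_assoc, ← exp_add, neg_add_cancel, exp_zero, mul_one]
    _ ≤ f a * exp (G t) := mul_le_mul_of_nonneg_right hFt (exp_pos _).le

theorem mul_exp_integral_le_of_mul_le_deriv (hg : ContinuousOn g (Icc a b))
    (hf : ContinuousOn f (Icc a b)) (hf' : ∀ t ∈ Ioo a b, HasDerivAt f (f' t) t)
    (hle : ∀ t ∈ Ioo a b, g t * f t ≤ f' t) :
    ∀ t ∈ Icc a b, f a * exp (∫ s in a..t, g s) ≤ f t := by
  intro t ht
  have := le_mul_exp_integral_of_deriv_le_mul (f := -f) (f' := -f') hg hf.neg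
    (fun s hs => (hf' s hs).neg) (fun s hs => by simpa using hle s hs) t ht
  simpa using this

end Gronwall

noncomputable section Empirical

variable {ι E : Type*} [Fintype ι] [NormedAddCommGroup E] [InnerProductSpace ℝ E]

local notation "n" => (Fintype.card ι : ℝ)

def empiricalMean (u : ι → E) : E := n⁻¹ • ∑ j, u j

def empiricalVariance (u : ι → E) : ℝ :=
  n⁻¹ * ∑ j, ‖u j - empiricalMean u‖ ^ 2

theorem sum_sub_empiricalMean (u : ι → E) : ∑ j, (u j - empiricalMean u) = 0 := by
  cases isEmpty_or_nonempty ι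
  · simp
  · rw [sum_sub_distrib, sum_const, card_univ, empiricalMean, ← Nat.cast_smul_eq_nsmul ℝ,
      smul_inv_smul₀ (Nat.cast_ne_zero.2 Fintype.card_ne_zero), sub_self]

theorem sum_inner_sub_empiricalMean (u : ι → E) (x : E) :
    ∑ j, ⟪u j - empiricalMean u, x⟫ = 0 := by
  rw [← sum_inner, sum_sub_empiricalMean, inner_zero_left]

theorem hasDerivAt_empiricalVariance {u : ι → ℝ → E} {u' : ι → E} {t : ℝ}
    (hu : ∀ j, HasDerivAt (u j) (u' j) t) :
    HasDerivAt (fun s => empiricalVariance fun j => u j s)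
      (2 * n⁻¹ * ∑ j, ⟪u j t - empiricalMean (fun j => u j t), u' j⟫) t := by
  have hmean : HasDerivAt (fun s => empiricalMean fun j => u j s) (empiricalMean u') t :=
    (HasDerivAt.fun_sum fun j _ => hu j).const_smul _
  have hsq : HasDerivAt (fun s => ∑ j, ‖u j s - empiricalMean (fun j => u j s)‖ ^ 2)
      (∑ j, 2 * ⟪u j t - empiricalMean (fun j => u j t), u' j - empiricalMean u'⟫) t :=
    HasDerivAt.fun_sum fun j _ => ((hu j).sub hmean).norm_sq
  refine (hsq.const_mul n⁻¹).congr_deriv ?_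
  simp only [inner_sub_right, mul_sub, sum_sub_distrib, ← mul_sum, sum_inner_sub_empiricalMean]
  ring

theorem sum_sum_norm_sub_sq (u : ι → E) :
    ∑ j, ∑ k, ‖u k - u j‖ ^ 2 = 2 * n * ∑ j, ‖u j - empiricalMean u‖ ^ 2 := by
  set w := fun j => u j - empiricalMean u
  have h0 : ∑ j, w j = 0 := sum_sub_empiricalMean u
  have hw : ∀ j k, u k - u j = w k - w j := fun j k => (sub_sub_sub_cancel_right _ _ _).symm
  change _ = _ * ∑ j, ‖w j‖ ^ 2
  simp only [hw, norm_sub_sq_real, sum_add_distrib, sum_sub_distrib, ← mul_sum, ← sum_inner, h0,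
    inner_zero_left, sum_const, card_univ, nsmul_eq_mul]
  ring

theorem sum_inner_sum_smul_sub_of_symm (p : ι → ι → ℝ) (hp : ∀ j k, p j k = p k j) (w : ι → E) :
    ∑ j, ⟪w j, ∑ k, p j k • (w k - w j)⟫ = -(1 / 2) * ∑ j, ∑ k, p j k * ‖w k - w j‖ ^ 2 := by
  have hswap : ∑ j, ∑ k, p j k * ⟪w j, w k - w j⟫ = ∑ j, ∑ k, p j k * ⟪w k, w j - w k⟫ := by
    rw [sum_comm]; simp only [hp]
  have hpair : ∀ j k, ⟪w j, w k - w j⟫ + ⟪w k, w j - w k⟫ = -‖w k - w j‖ ^ 2 := fun j k => by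
    rw [← neg_sub (w k) (w j), inner_neg_right, ← sub_eq_add_neg, ← inner_sub_left,
      ← neg_sub (w k) (w j), inner_neg_left, real_inner_self_eq_norm_sq]
  have hsum : ∑ j, ∑ k, p j k * ⟪w j, w k - w j⟫ + ∑ j, ∑ k, p j k * ⟪w k, w j - w k⟫ =
      -∑ j, ∑ k, p j k * ‖w k - w j‖ ^ 2 := by
    simp only [← sum_add_distrib, ← mul_add, hpair, mul_neg, sum_neg_distrib]
  simp only [inner_sum, real_inner_smul_right]
  linear_combination (1 / 2 : ℝ) * hswap + (1 / 2 : ℝ) * hsum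

theorem variance_dissipation_eq (p : ι → ι → ℝ)
    (hp : ∀ j k, p j k = p k j) (u : ι → E) (c : ℝ) (r : E) :
    2 * n⁻¹ * ∑ j, ⟪u j - empiricalMean u, n⁻¹ • ∑ k, p j k • (u k - u j) + (c • u j + r)⟫ =
      2 * c * empiricalVariance u - n⁻¹ * n⁻¹ * ∑ j, ∑ k, p j k * ‖u k - u j‖ ^ 2 := by
  have hinteraction := sum_inner_sum_smul_sub_of_symm p hp fun j => u j - empiricalMean u
  simp only [sub_sub_sub_cancel_right] at hinteraction
  have hfeedback : ∀ j, c • u j + r = c • (u j - empiricalMean u) + (c • empiricalMean u + r) :=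
    fun j => by module
  simp only [hfeedback, inner_add_right, inner_smul_right, real_inner_self_eq_norm_sq,
    sum_add_distrib, ← mul_sum, sum_inner_sub_empiricalMean, hinteraction, empiricalVariance]
  ring

theorem variance_dissipation_bounds (p : ι → ι → ℝ) (hp : ∀ j k, p j k = p k j) {a b : ℝ}
    (hpa : ∀ j k, -a ≤ p j k) (hpb : ∀ j k, p j k ≤ b) (u : ι → E) (c : ℝ) (r : E) :
    (2 * c - 2 * b) * empiricalVariance u ≤
        2 * n⁻¹ * ∑ j, ⟪u j - empiricalMean u, n⁻¹ • ∑ k, p j k • (u k - u j) + (c • u j + r)⟫ ∧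
      2 * n⁻¹ * ∑ j, ⟪u j - empiricalMean u, n⁻¹ • ∑ k, p j k • (u k - u j) + (c • u j + r)⟫ ≤
        (2 * c + 2 * a) * empiricalVariance u := by
  rw [variance_dissipation_eq p hp]
  have hpairs := sum_sum_norm_sub_sq u
  have hupper : ∑ j, ∑ k, p j k * ‖u k - u j‖ ^ 2 ≤ b * ∑ j, ∑ k, ‖u k - u j‖ ^ 2 := by
    simp only [mul_sum]
    exact sum_le_sum fun j _ => sum_le_sum fun k _ => by gcongr; exact hpb j k
  have hlower : -a * ∑ j, ∑ k, ‖u k - u j‖ ^ 2 ≤ ∑ j, ∑ k, p j k * ‖u k - u j‖ ^ 2 := by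
    simp only [mul_sum]
    exact sum_le_sum fun j _ => sum_le_sum fun k _ => by gcongr; exact hpa j k
  have hinv : n⁻¹ * n⁻¹ * n = n⁻¹ := by simpa only [inv_inv] using mul_self_mul_inv n⁻¹
  have hscale :
      n⁻¹ * n⁻¹ * (2 * n * ∑ j, ‖u j - empiricalMean u‖ ^ 2) = 2 * empiricalVariance u := by
    rw [empiricalVariance]
    linear_combination (2 * ∑ j, ‖u j - empiricalMean u‖ ^ 2) * hinv
  have hn : 0 ≤ n⁻¹ * n⁻¹ := by positivity
  rw [hpairs] at hupper hlower
  constructor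
  · have h := mul_le_mul_of_nonneg_left hupper hn
    rw [mul_left_comm, hscale] at h
    linarith
  · have h := mul_le_mul_of_nonneg_left hlower hn
    rw [mul_left_comm, hscale] at h
    linarith

theorem exists_hasDerivAt_empiricalVariance_bounds {u : ι → ℝ → E} {t : ℝ}
    (p : ι → ι → ℝ) (hp : ∀ j k, p j k = p k j) {a b : ℝ} (hpa : ∀ j k, -a ≤ p j k)
    (hpb : ∀ j k, p j k ≤ b) {c : ℝ} {r : E}
    (hu : ∀ j, HasDerivAt (u j) (n⁻¹ • ∑ k, p j k • (u k t - u j t) + (c • u j t + r)) t) :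
    ∃ D, HasDerivAt (fun s => empiricalVariance fun j => u j s) D t ∧
      (2 * c - 2 * b) * empiricalVariance (fun j => u j t) ≤ D ∧
      D ≤ (2 * c + 2 * a) * empiricalVariance (fun j => u j t) :=
  ⟨_, hasDerivAt_empiricalVariance hu,
    variance_dissipation_bounds p hp hpa hpb (fun j => u j t) c r⟩

end Empirical

theorem intervalIntegral.integral_const_mul_add_const {κ : ℝ → ℝ} {a b : ℝ}
    (hκ : IntervalIntegrable κ volume a b) (α β : ℝ) :
    ∫ s in a..b, (α * κ s + β) = β * (b - a) + α * ∫ s in a..b, κ s := by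
  rw [intervalIntegral.integral_add (hκ.const_mul α) intervalIntegrable_const,
    intervalIntegral.integral_const_mul, intervalIntegral.integral_const, smul_eq_mul]
  ring

theorem closed_loop_variance_bounds_general (N d : ℕ)
    (T ν p a b : ℝ)
    (P : EuclideanSpace ℝ (Fin d) → EuclideanSpace ℝ (Fin d) → ℝ)
    (hPsymm : ∀ v w, P v w = P w v)
    (hPbound : ∀ v w, -a ≤ P v w ∧ P v w ≤ b)
    (kd ko : ℝ → ℝ)
    (hkd : ∀ t ∈ Icc (0:ℝ) T, HasDerivAt kd
        (-(-2 * p * (((N : ℝ) - 1) / N) * (kd t - ko t / N)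
            - (1 / ν) * ((kd t) ^ 2 + ((((N : ℝ) - 1) / N) / N) * (ko t) ^ 2) + 1)) t)
    (hko : ∀ t ∈ Icc (0:ℝ) T, HasDerivAt ko
        (-(2 * p * (kd t - ko t / N)
            - (1 / ν) * (2 * kd t * ko t + (((N : ℝ) - 1) / N) * (ko t) ^ 2
                - (ko t) ^ 2 / N))) t)
    (v : Fin N → ℝ → EuclideanSpace ℝ (Fin d))
    (hv : ∀ t ∈ Icc (0:ℝ) T, ∀ i : Fin N,
        HasDerivAt (v i)
          ((N : ℝ)⁻¹ • ∑ j, P (v i t) (v j t) • (v j t - v i t)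
            + (-(1 / ν)) • ((kd t - ko t / N) • v i t + (ko t / N) • ∑ j, v j t)) t)
    (m : ℝ → EuclideanSpace ℝ (Fin d))
    (hm : ∀ t, m t = (N : ℝ)⁻¹ • ∑ j, v j t)
    (σ2 : ℝ → ℝ) (hσ2 : ∀ t, σ2 t = (N : ℝ)⁻¹ * ∑ j, ‖v j t - m t‖ ^ 2) :
    ∀ t ∈ Icc (0:ℝ) T,
      σ2 0 * Real.exp (-2 * b * t)
          * Real.exp (-(2 / ν) * ∫ s in (0:ℝ)..t, (kd s - ko s / N))
          ≤ σ2 t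
        ∧ σ2 t ≤ σ2 0 * Real.exp (2 * a * t)
          * Real.exp (-(2 / ν) * ∫ s in (0:ℝ)..t, (kd s - ko s / N)) := by
  have hκ : ContinuousOn (fun s => kd s - ko s / N) (Icc 0 T) := fun t ht =>
    ((hkd t ht).continuousAt.sub ((hko t ht).continuousAt.div_const _)).continuousWithinAt
  obtain rfl : σ2 = fun t => empiricalVariance fun j => v j t := by
    funext t
    simp only [hσ2, hm, empiricalVariance, empiricalMean, Fintype.card_fin]
  choose! D hD hDlower hDupper using fun t (ht : t ∈ Icc (0:ℝ) T) =>
    exists_hasDerivAt_empiricalVariance_bounds (fun j k => P (v j t) (v k t))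
      (fun _ _ => hPsymm _ _) (fun _ _ => (hPbound _ _).1) (fun _ _ => (hPbound _ _).2)
      (c := -(1 / ν) * (kd t - ko t / N)) (r := (-(1 / ν) * (ko t / N)) • ∑ j, v j t)
      fun j => by simpa only [Fintype.card_fin, smul_add, smul_smul] using hv t ht j
  have hcont : ContinuousOn (fun t => empiricalVariance fun j => v j t) (Icc 0 T) :=
    fun t ht => (hD t ht).continuousAt.continuousWithinAt
  have hD' : ∀ t ∈ Ioo 0 T, HasDerivAt _ (D t) t := fun t ht => hD t (Ioo_subset_Icc_self ht)
  intro t ht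
  have hint : IntervalIntegrable (fun s => kd s - ko s / N) volume 0 t :=
    (hκ.mono (Icc_subset_Icc_right ht.2)).intervalIntegrable_of_Icc ht.1
  constructor
  · have h := mul_exp_integral_le_of_mul_le_deriv
      (g := fun s => -(2 / ν) * (kd s - ko s / N) + -2 * b)
      ((hκ.const_mul _).add continuousOn_const) hcont hD'
      (fun s hs => Eq.trans_le (by ring) (hDlower s (Ioo_subset_Icc_self hs))) t ht
    rwa [intervalIntegral.integral_const_mul_add_const hint, sub_zero, exp_add, ← mul_assoc] at h
  · have h := le_mul_exp_integral_of_deriv_le_mul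
      (g := fun s => -(2 / ν) * (kd s - ko s / N) + 2 * a)
      ((hκ.const_mul _).add continuousOn_const) hcont hD'
      (fun s hs => (hDupper s (Ioo_subset_Icc_self hs)).trans_eq (by ring)) t ht
    rwa [intervalIntegral.integral_const_mul_add_const hint, sub_zero, exp_add, ← mul_assoc] at h

/-- For the closed-loop system with symmetric interaction kernel
bounded by `−a ≤ P ≤ b`, the empirical variance satisfies
`σ²(0) e^{−2bt} C_N(t) ≤ σ²(t) ≤ σ²(0) e^{2at} C_N(t)` with
`C_N(t) = exp(−(2/ν)∫₀ᵗ (k_d − k_o/N))`. -/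
theorem closed_loop_variance_bounds (N d : ℕ) (hN : 1 ≤ N) (hd : 1 ≤ d)
    (T ν p a b : ℝ) (hT : 0 < T) (hν : 0 < ν) (ha : 0 ≤ a) (hb : 0 ≤ b)
    (P : EuclideanSpace ℝ (Fin d) → EuclideanSpace ℝ (Fin d) → ℝ)
    (hPcont : Continuous fun q : EuclideanSpace ℝ (Fin d) × EuclideanSpace ℝ (Fin d) =>
      P q.1 q.2)
    (hPsymm : ∀ v w, P v w = P w v)
    (hPbound : ∀ v w, -a ≤ P v w ∧ P v w ≤ b)
    (kd ko : ℝ → ℝ)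
    (hkd : ∀ t ∈ Icc (0:ℝ) T, HasDerivAt kd
        (-(-2 * p * (((N : ℝ) - 1) / N) * (kd t - ko t / N)
            - (1 / ν) * ((kd t) ^ 2 + ((((N : ℝ) - 1) / N) / N) * (ko t) ^ 2) + 1)) t)
    (hkdT : kd T = 0)
    (hko : ∀ t ∈ Icc (0:ℝ) T, HasDerivAt ko
        (-(2 * p * (kd t - ko t / N)
            - (1 / ν) * (2 * kd t * ko t + (((N : ℝ) - 1) / N) * (ko t) ^ 2
                - (ko t) ^ 2 / N))) t)
    (hkoT : ko T = 0)
    (v : Fin N → ℝ → EuclideanSpace ℝ (Fin d))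
    (hv : ∀ t ∈ Icc (0:ℝ) T, ∀ i : Fin N,
        HasDerivAt (v i)
          ((N : ℝ)⁻¹ • ∑ j, P (v i t) (v j t) • (v j t - v i t)
            + (-(1 / ν)) • ((kd t - ko t / N) • v i t + (ko t / N) • ∑ j, v j t)) t)
    (m : ℝ → EuclideanSpace ℝ (Fin d))
    (hm : ∀ t, m t = (N : ℝ)⁻¹ • ∑ j, v j t)
    (σ2 : ℝ → ℝ) (hσ2 : ∀ t, σ2 t = (N : ℝ)⁻¹ * ∑ j, ‖v j t - m t‖ ^ 2) :
    ∀ t ∈ Icc (0:ℝ) T,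
      σ2 0 * Real.exp (-2 * b * t)
          * Real.exp (-(2 / ν) * ∫ s in (0:ℝ)..t, (kd s - ko s / N))
          ≤ σ2 t
        ∧ σ2 t ≤ σ2 0 * Real.exp (2 * a * t)
          * Real.exp (-(2 / ν) * ∫ s in (0:ℝ)..t, (kd s - ko s / N)) :=
  closed_loop_variance_bounds_general N d T ν p a b P hPsymm hPbound kd ko hkd hko v hv m hm σ2 hσ2
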